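/- arXiv:1804.02100 — 3 statements merged into one kernel-verified Lean document; each statement's English description precedes it below -/
import Mathlib

section
/- For ρ > 0 and m ∈ ℕ, define B_m = ∑_{n=0}^{m} ρ^n/n! and F(m) = B_{m-1}/B_m for m ≥ 1 with F(0) = 0. Then F is strictly increasing in m: F(m) < F(m+1) for all m ≥ 0. -/
/-!
Write `S m = ∑_{n<m} ρⁿ/n!` and `t m = ρᵐ/m!`, so that `F(m) = S m / S (m+1)`. Since
`t (m+1) = ρ t m / (m+1)`, a direct computation gives
`S(m+1)² - S m · S(m+2) = t m / (m+1) · ((m+1) S(m+1) - ρ S m)`,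
and the bracket is positive because `ρ S m = ∑_{n<m} (n+1) t(n+1) ≤ m S(m+1)`.
Hence `S` is strictly log-concave, which is the claim.
-/

open Finset Nat

noncomputable def expPartialSum (x : ℝ) (m : ℕ) : ℝ :=
  ∑ n ∈ range m, x ^ n / n !

lemma expPartialSum_succ (x : ℝ) (m : ℕ) :
    expPartialSum x (m + 1) = expPartialSum x m + x ^ m / m ! :=
  sum_range_succ _ _

lemma mul_pow_div_factorial (x : ℝ) (n : ℕ) :
    x * (x ^ n / n !) = (n + 1) * (x ^ (n + 1) / (n + 1)!) := by
  rw [factorial_succ]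
  push_cast
  field_simp
  ring

lemma expPartialSum_succ_eq_sum_shift_add_one (x : ℝ) (m : ℕ) :
    expPartialSum x (m + 1) = ∑ n ∈ range m, x ^ (n + 1) / (n + 1)! + 1 := by
  simp [expPartialSum, sum_range_succ']

lemma expPartialSum_succ_pos {x : ℝ} (hx : 0 ≤ x) (m : ℕ) : 0 < expPartialSum x (m + 1) := by
  rw [expPartialSum_succ_eq_sum_shift_add_one]
  have : 0 ≤ ∑ n ∈ range m, x ^ (n + 1) / (n + 1)! := by positivity
  linarith

lemma mul_expPartialSum_lt {x : ℝ} (hx : 0 ≤ x) (m : ℕ) :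
    x * expPartialSum x m < (m + 1) * expPartialSum x (m + 1) := by
  have hS := expPartialSum_succ_pos hx m
  have hshift := expPartialSum_succ_eq_sum_shift_add_one x m
  calc x * expPartialSum x m
      = ∑ n ∈ range m, ((n : ℝ) + 1) * (x ^ (n + 1) / (n + 1)!) := by
        simp only [expPartialSum, mul_sum, mul_pow_div_factorial]
    _ ≤ ∑ n ∈ range m, (m : ℝ) * (x ^ (n + 1) / (n + 1)!) := by
        gcongr with n hn
        exact_mod_cast mem_range.1 hn
    _ = m * (expPartialSum x (m + 1) - 1) := by rw [← mul_sum, hshift, add_sub_cancel_right]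
    _ < (m + 1) * expPartialSum x (m + 1) := by nlinarith

lemma sq_expPartialSum_sub_mul (x : ℝ) (m : ℕ) :
    expPartialSum x (m + 1) ^ 2 - expPartialSum x m * expPartialSum x (m + 2)
      = x ^ m / m ! / (m + 1) * ((m + 1) * expPartialSum x (m + 1) - x * expPartialSum x m) := by
  have hnext : x ^ (m + 1) / (m + 1)! = x * (x ^ m / m !) / (m + 1) := by
    rw [mul_pow_div_factorial]
    field_simp
  rw [expPartialSum_succ x (m + 1), hnext, expPartialSum_succ x m]
  field_simp
  ring

lemma expPartialSum_mul_lt_sq {x : ℝ} (hx : 0 < x) (m : ℕ) :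
    expPartialSum x m * expPartialSum x (m + 2) < expPartialSum x (m + 1) ^ 2 := by
  have hgap := sq_expPartialSum_sub_mul x m
  have hbracket := mul_expPartialSum_lt hx.le m
  have ht : 0 < x ^ m / m ! / (m + 1) := by positivity
  nlinarith

lemma expPartialSum_div_lt_div {x : ℝ} (hx : 0 < x) (m : ℕ) :
    expPartialSum x m / expPartialSum x (m + 1)
      < expPartialSum x (m + 1) / expPartialSum x (m + 2) := by
  rw [div_lt_div_iff₀ (expPartialSum_succ_pos hx.le m) (expPartialSum_succ_pos hx.le (m + 1))]
  simpa [sq] using expPartialSum_mul_lt_sq hx m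

/-- With `B_m = ∑_{n=0}^m ρ^n/n!` and `F(m) = B_{m-1}/B_m` (so `F(0) = 0`,
as the empty sum is `0`), the function `F` is strictly increasing in `m`. -/
theorem stmt4 (ρ : ℝ) (hρ : 0 < ρ) :
    ∀ m : ℕ,
      (∑ n ∈ Finset.range m, ρ ^ n / n.factorial) /
          (∑ n ∈ Finset.range (m + 1), ρ ^ n / n.factorial)
        < (∑ n ∈ Finset.range (m + 1), ρ ^ n / n.factorial) /
            (∑ n ∈ Finset.range (m + 2), ρ ^ n / n.factorial) :=
  expPartialSum_div_lt_div hρ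
end

section
/- In the relaxed resource allocation problem, for any given multipliers γ ∈ ℝ_{≥0}^J, ν ∈ ℝ^L, the policy that activates pattern i in state n < |𝒩_i|-1 if and only if Ξ_i(γ,ν) > 0, where Ξ_i(γ,ν) = λ_{ℓ(i)}(r_{ℓ(i)} - (1/μ_i)∑_{j} ε_j w_{j,i}) - (1 + λ_{ℓ(i)}/μ_i)∑_{j} w_{j,i} γ_j - ν_{ℓ(i)}, maximizes the Lagrangian term Λ_i for each sub-problem i (for sufficiently large penalty η_i); moreover the optimal activation decision is independent of the state n (for n < |𝒩_i|-1). -/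
/-!
Detailed balance of the birth-and-death chain, `u (n+1) (n+1) μ = u n α n λ`, turns the expected
activation `∑ π n α n` into `(μ/λ) E[n] + π K α K`, so that
`Λ = (μ/λ) Ξ E_α[n] - (ν + ∑ w γ + η) π K α K`. Once `η > -(ν + ∑ w γ)` the boundary term can
only lower `Λ`, and it vanishes for the index policy, which never activates the state `K`.
If `Ξ ≤ 0` the index policy never activates at all, so its `E[n]` is `0` and every other
policy has `Λ ≤ 0`. If `Ξ > 0` it activates every state below `K`; any policy `α` has weights
`u_α n = (∏_{k<n} α k) u_1 n` with a decreasing factor, so Chebyshev's sum inequality for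
the weights `u_1` gives `E_α[n] ≤ E_1[n]`.
-/

open Finset

/-- Unnormalized stationary measure of the birth-and-death sub-process for a
pattern under a (randomized) policy `α`: state `n` has weight
`∏_{k<n} α(k)λ / ((k+1)μ)`. -/
noncomputable def unnorm (lam mu : ℝ) (α : ℕ → ℝ) (n : ℕ) : ℝ :=
  ∏ k ∈ Finset.range n, (α k * lam) / (((k : ℝ) + 1) * mu)

/-- Stationary distribution on states `{0,…,K}` of the sub-process under
policy `α`. -/
noncomputable def statDist (lam mu : ℝ) (K : ℕ) (α : ℕ → ℝ) (n : ℕ) : ℝ :=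
  unnorm lam mu α n / ∑ k ∈ Finset.range (K + 1), unnorm lam mu α k

/-- Lagrangian term `Λ_i` of the sub-problem for a pattern with reward `r`,
service rate `mu`, weights `w`, multipliers `ν` (action), `γ` (capacity) and
`η` (boundary), cost rates `eps`. -/
noncomputable def Lag (lam mu r ν η : ℝ) {J : ℕ} (w eps γ : Fin J → ℝ) (K : ℕ)
    (α : ℕ → ℝ) : ℝ :=
  (r * mu - ∑ j, eps j * w j) * (∑ n ∈ Finset.range (K + 1), statDist lam mu K α n * n)
    - ν * (∑ n ∈ Finset.range (K + 1), statDist lam mu K α n * α n)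
    - (∑ j, γ j * w j) *
        ((∑ n ∈ Finset.range (K + 1), statDist lam mu K α n * n)
          + ∑ n ∈ Finset.range (K + 1), statDist lam mu K α n * α n)
    - η * statDist lam mu K α K * α K

/-- The index `Ξ_i(γ,ν)` of a pattern. -/
noncomputable def XiIdx (lam mu r ν : ℝ) {J : ℕ} (w eps γ : Fin J → ℝ) : ℝ :=
  lam * (r - (1 / mu) * ∑ j, eps j * w j) - (1 + lam / mu) * (∑ j, w j * γ j) - ν

section Chebyshev

variable {ι : Type*} {s : Finset ι} {f g v : ι → ℝ}

theorem AntivaryOn.sum_mul_mul_sum_le (hfg : AntivaryOn f g s) (hv : ∀ i ∈ s, 0 ≤ v i) :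
    (∑ i ∈ s, f i * g i * v i) * ∑ i ∈ s, v i ≤
      (∑ i ∈ s, f i * v i) * ∑ i ∈ s, g i * v i := by
  have key : ∑ i ∈ s, ∑ j ∈ s, v i * v j * (f i * g i + f j * g j) ≤
      ∑ i ∈ s, ∑ j ∈ s, v i * v j * (f i * g j + f j * g i) :=
    sum_le_sum fun i hi => sum_le_sum fun j hj =>
      mul_le_mul_of_nonneg_left (hfg.mul_add_mul_le_mul_add_mul hi hj)
        (mul_nonneg (hv i hi) (hv j hj))
  have hL : ∑ i ∈ s, ∑ j ∈ s, v i * v j * (f i * g i + f j * g j) =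
      2 * ((∑ i ∈ s, f i * g i * v i) * ∑ i ∈ s, v i) := by
    rw [two_mul, sum_mul_sum]
    nth_rewrite 2 [sum_comm]
    rw [← sum_add_distrib]
    exact sum_congr rfl fun _ _ => by rw [← sum_add_distrib]; exact sum_congr rfl fun _ _ => by ring
  have hR : ∑ i ∈ s, ∑ j ∈ s, v i * v j * (f i * g j + f j * g i) =
      2 * ((∑ i ∈ s, f i * v i) * ∑ i ∈ s, g i * v i) := by
    rw [two_mul, sum_mul_sum]
    nth_rewrite 2 [sum_comm]
    rw [← sum_add_distrib]
    exact sum_congr rfl fun _ _ => by rw [← sum_add_distrib]; exact sum_congr rfl fun _ _ => by ring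
  linarith

end Chebyshev

section SubProcess

variable {lam mu : ℝ} {K : ℕ} {α : ℕ → ℝ}

noncomputable def meanState (lam mu : ℝ) (K : ℕ) (α : ℕ → ℝ) : ℝ :=
  ∑ n ∈ range (K + 1), statDist lam mu K α n * n

lemma unnorm_nonneg (hlam : 0 ≤ lam) (hmu : 0 ≤ mu) (hα : ∀ n, 0 ≤ α n) (n : ℕ) :
    0 ≤ unnorm lam mu α n :=
  prod_nonneg fun k _ => by have := hα k; positivity

lemma sum_unnorm_pos (hlam : 0 ≤ lam) (hmu : 0 ≤ mu) (hα : ∀ n, 0 ≤ α n) (K : ℕ) :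
    0 < ∑ n ∈ range (K + 1), unnorm lam mu α n := by
  rw [sum_range_succ']
  have hrest := sum_nonneg fun n (_ : n ∈ range K) => unnorm_nonneg hlam hmu hα (n + 1)
  simp only [unnorm, range_zero, prod_empty] at hrest ⊢
  linarith

lemma statDist_nonneg (hlam : 0 ≤ lam) (hmu : 0 ≤ mu) (hα : ∀ n, 0 ≤ α n) (n : ℕ) :
    0 ≤ statDist lam mu K α n :=
  div_nonneg (unnorm_nonneg hlam hmu hα n) (sum_unnorm_pos hlam hmu hα K).le

lemma meanState_nonneg (hlam : 0 ≤ lam) (hmu : 0 ≤ mu) (hα : ∀ n, 0 ≤ α n) :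
    0 ≤ meanState lam mu K α :=
  sum_nonneg fun n _ => mul_nonneg (statDist_nonneg hlam hmu hα n) n.cast_nonneg

lemma meanState_eq_div (lam mu : ℝ) (K : ℕ) (α : ℕ → ℝ) :
    meanState lam mu K α =
      (∑ n ∈ range (K + 1), unnorm lam mu α n * n) / ∑ n ∈ range (K + 1), unnorm lam mu α n := by
  rw [meanState, sum_div]
  exact sum_congr rfl fun n _ => div_mul_eq_mul_div _ _ _

lemma meanState_const_zero (lam mu : ℝ) (K : ℕ) : meanState lam mu K (fun _ => 0) = 0 := by
  refine sum_eq_zero fun n _ => ?_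
  rcases n with _ | n
  · simp
  · simp [statDist, unnorm]

lemma unnorm_succ_mul (hmu : mu ≠ 0) (α : ℕ → ℝ) (n : ℕ) :
    unnorm lam mu α (n + 1) * ((n + 1) * mu) = unnorm lam mu α n * α n * lam := by
  rw [unnorm, prod_range_succ, ← unnorm]
  field_simp

lemma sum_unnorm_mul_eq (hlam : lam ≠ 0) (hmu : mu ≠ 0) (α : ℕ → ℝ) (K : ℕ) :
    ∑ n ∈ range (K + 1), unnorm lam mu α n * α n =
      mu / lam * ∑ n ∈ range (K + 1), unnorm lam mu α n * n + unnorm lam mu α K * α K := by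
  rw [sum_range_succ, sum_range_succ', Nat.cast_zero, mul_zero, add_zero, mul_sum]
  congr 1
  refine sum_congr rfl fun n _ => ?_
  have := unnorm_succ_mul (lam := lam) hmu α n
  field_simp
  push_cast
  linarith

lemma sum_statDist_mul_eq (hlam : lam ≠ 0) (hmu : mu ≠ 0) (α : ℕ → ℝ) (K : ℕ) :
    ∑ n ∈ range (K + 1), statDist lam mu K α n * α n =
      mu / lam * meanState lam mu K α + statDist lam mu K α K * α K := by
  simp only [meanState, statDist, div_mul_eq_mul_div, ← sum_div]
  rw [sum_unnorm_mul_eq hlam hmu]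
  ring

lemma Lag_eq (hlam : lam ≠ 0) (hmu : mu ≠ 0) (r ν η : ℝ) {J : ℕ} (w eps γ : Fin J → ℝ)
    (K : ℕ) (α : ℕ → ℝ) :
    Lag lam mu r ν η w eps γ K α =
      mu / lam * XiIdx lam mu r ν w eps γ * meanState lam mu K α
        - (ν + ∑ j, w j * γ j + η) * (statDist lam mu K α K * α K) := by
  have hwγ : ∑ j, γ j * w j = ∑ j, w j * γ j := sum_congr rfl fun j _ => mul_comm _ _
  rw [Lag, sum_statDist_mul_eq hlam hmu, ← meanState, hwγ, XiIdx]
  field_simp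
  ring

lemma unnorm_eq_prod_mul (lam mu : ℝ) (α : ℕ → ℝ) (n : ℕ) :
    unnorm lam mu α n = (∏ k ∈ range n, α k) * unnorm lam mu (fun _ => 1) n := by
  rw [unnorm, unnorm, ← prod_mul_distrib]
  exact prod_congr rfl fun _ _ => by ring

lemma meanState_le_of_eq_one (hlam : 0 ≤ lam) (hmu : 0 ≤ mu) (hα : ∀ n, 0 ≤ α n ∧ α n ≤ 1)
    {β : ℕ → ℝ} (hβ : ∀ k < K, β k = 1) :
    meanState lam mu K α ≤ meanState lam mu K β := by
  set v := unnorm lam mu (fun _ => 1)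
  set P : ℕ → ℝ := fun n => ∏ k ∈ range n, α k
  have hαv : ∀ n, unnorm lam mu α n = P n * v n := unnorm_eq_prod_mul lam mu α
  have hβv : ∀ n ∈ range (K + 1), unnorm lam mu β n = v n := fun n hn => by
    rw [unnorm_eq_prod_mul, prod_eq_one fun k hk => hβ k ?_, one_mul]
    exact (mem_range.1 hk).trans_le (Nat.lt_succ_iff.1 (mem_range.1 hn))
  have hP : Antitone P := antitone_nat_of_succ_le fun n =>
    (prod_range_succ α n).trans_le
      (mul_le_of_le_one_right (prod_nonneg fun k _ => (hα k).1) (hα n).2)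
  have hcheb :=
    ((Nat.mono_cast.antivary hP).antivaryOn (range (K + 1) : Set ℕ)).sum_mul_mul_sum_le
      fun n _ => unnorm_nonneg (α := fun _ => 1) hlam hmu (fun _ => zero_le_one) n
  have hSβ : ∑ n ∈ range (K + 1), unnorm lam mu β n = ∑ n ∈ range (K + 1), v n :=
    sum_congr rfl hβv
  have hMβ : ∑ n ∈ range (K + 1), unnorm lam mu β n * n = ∑ n ∈ range (K + 1), v n * n :=
    sum_congr rfl fun n hn => by rw [hβv n hn]
  rw [meanState_eq_div, meanState_eq_div, hSβ, hMβ,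
    div_le_div_iff₀ (sum_unnorm_pos hlam hmu (fun n => (hα n).1) K)
      (sum_unnorm_pos hlam hmu (fun _ => zero_le_one) K)]
  simp only [hαv]
  convert hcheb using 3 <;> first | rfl | ring

end SubProcess

open Classical in
theorem stmt6_general (lam mu r ν : ℝ) (hlam : 0 < lam) (hmu : 0 < mu)
    (J K : ℕ) (w eps γ : Fin J → ℝ) :
    ∃ E : ℝ, ∀ η : ℝ, E < η → ∀ α : ℕ → ℝ, (∀ n, 0 ≤ α n ∧ α n ≤ 1) →
      Lag lam mu r ν η w eps γ K α ≤
        Lag lam mu r ν η w eps γ K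
          (fun n => if 0 < XiIdx lam mu r ν w eps γ ∧ n < K then (1 : ℝ) else 0) := by
  refine ⟨-(ν + ∑ j, w j * γ j), fun η hη α hα => ?_⟩
  set Ξ := XiIdx lam mu r ν w eps γ
  set β : ℕ → ℝ := fun n => if 0 < Ξ ∧ n < K then 1 else 0 with hβ
  rw [Lag_eq hlam.ne' hmu.ne', Lag_eq hlam.ne' hmu.ne', show β K = 0 by simp [hβ], mul_zero,
    mul_zero, sub_zero]
  have hα0 : ∀ n, 0 ≤ α n := fun n => (hα n).1
  have hpenalty : 0 ≤ (ν + ∑ j, w j * γ j + η) * (statDist lam mu K α K * α K) :=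
    mul_nonneg (by linarith) (mul_nonneg (statDist_nonneg hlam.le hmu.le hα0 K) (hα0 K))
  suffices mu / lam * Ξ * meanState lam mu K α ≤ mu / lam * Ξ * meanState lam mu K β by linarith
  by_cases hΞ : 0 < Ξ
  · exact mul_le_mul_of_nonneg_left
      (meanState_le_of_eq_one hlam.le hmu.le hα fun k hk => if_pos ⟨hΞ, hk⟩) (by positivity)
  · rw [show β = fun _ => 0 from funext fun n => if_neg fun h => hΞ h.1, meanState_const_zero,
      mul_zero]
    exact mul_nonpos_of_nonpos_of_nonneg
      (mul_nonpos_of_nonneg_of_nonpos (by positivity) (not_lt.1 hΞ))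
      (meanState_nonneg hlam.le hmu.le hα0)

open Classical in
/-- Proposition 1: for given multipliers `γ ≥ 0`, `ν`, and sufficiently large
boundary penalty `η`, the state-independent policy that activates a
(non-boundary) state `n < K` if and only if `Ξ_i(γ,ν) > 0` maximizes the
Lagrangian `Λ_i` of the sub-problem over all randomized policies. -/
theorem stmt6 (lam mu r ν : ℝ) (hlam : 0 < lam) (hmu : 0 < mu)
    (J K : ℕ) (hK : 0 < K) (w eps γ : Fin J → ℝ) (hγ : ∀ j, 0 ≤ γ j) :
    ∃ E : ℝ, ∀ η : ℝ, E < η → ∀ α : ℕ → ℝ, (∀ n, 0 ≤ α n ∧ α n ≤ 1) →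
      Lag lam mu r ν η w eps γ K α ≤
        Lag lam mu r ν η w eps γ K
          (fun n => if 0 < XiIdx lam mu r ν w eps γ ∧ n < K then (1 : ℝ) else 0) :=
  stmt6_general lam mu r ν hlam hmu J K w eps γ
end

section
/- Let o be a ranking of pattern-state pairs and let ℐ(o) be the set of critical pairs produced by the priority algorithm (each critical pair ι ∈ ℐ(o) has an associated critical resource pool j_ι at which a capacity constraint first binds, after which all lower-priority pairs using pool j_ι are removed from the candidate list). Then the map ι ↦ i_ι from critical pairs to patterns is injective: distinct critical pairs correspond to distinct patterns. -/
/-- Lemma 1: distinct critical pairs correspond to distinct patterns.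
Pairs are ranked by priority (the order on `Fin N`); each critical pair `ι`
has a critical pool `jc ι` used by its pattern (`w (jc ι) (i ι) > 0`), and
once a pool becomes critical every lower-priority pair whose pattern uses it
is disabled (cannot be critical). -/
theorem stmt7 {N J I : ℕ} (i : Fin N → Fin I) (w : Fin J → Fin I → ℝ)
    (crit : Finset (Fin N)) (jc : Fin N → Fin J)
    (hpos : ∀ ι ∈ crit, 0 < w (jc ι) (i ι))
    (hdisable : ∀ ι ∈ crit, ∀ ι' : Fin N, ι < ι' → 0 < w (jc ι) (i ι') → ι' ∉ crit) :
    ∀ ι ∈ crit, ∀ ι' ∈ crit, ι ≠ ι' → i ι ≠ i ι' := by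
  -- a later pair of the same pattern uses the earlier pair's critical pool, so it was disabled
  have pattern_ne_of_lt : ∀ a ∈ crit, ∀ b ∈ crit, a < b → i a ≠ i b := fun a ha b hb hab hab_eq =>
    hdisable a ha b hab (hab_eq ▸ hpos a ha) hb
  intro ι hι ι' hι' hne
  rcases hne.lt_or_gt with h | h
  · exact pattern_ne_of_lt ι hι ι' hι' h
  · exact (pattern_ne_of_lt ι' hι' ι hι h).symm
end
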